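/- Let q = 2^m with m ≥ 1, F_q = GaloisField 2 m, and let P be a point of ℙ¹(F_q). Then the stabilizer of P in SL(2,F_q) has order q(q − 1), every element of this stabilizer maps some 2-element subset of ℙ¹(F_q) onto itself, and consequently the stabilizer is an intersecting set with respect to the induced action on 2-element subsets of ℙ¹(F_q). -/

import Mathlib

open scoped Pointwise MatrixGroups

noncomputable section

/-- The projective line over `K`. -/
abbrev Proj (K : Type*) [Field K] := Projectivization K (Fin 2 → K)

variable {K : Type*} [Field K]

lemma GLmulVecLin_injective (g : GL (Fin 2) K) :
    Function.Injective ((g : Matrix (Fin 2) (Fin 2) K).mulVecLin) := by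
  intro u v huv
  have h := congrArg ((((g⁻¹ : GL (Fin 2) K) : Matrix (Fin 2) (Fin 2) K)).mulVecLin) huv
  simp only [Matrix.mulVecLin_apply, Matrix.mulVec_mulVec] at h
  rw [show ((g⁻¹ : GL (Fin 2) K) : Matrix (Fin 2) (Fin 2) K) * (g : Matrix (Fin 2) (Fin 2) K) = 1
    from g.inv_mul, Matrix.one_mulVec, Matrix.one_mulVec] at h
  exact h

lemma GLmulVec_ne_zero (g : GL (Fin 2) K) {v : Fin 2 → K} (hv : v ≠ 0) :
    (g : Matrix (Fin 2) (Fin 2) K).mulVec v ≠ 0 := by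
  intro h
  apply hv
  have : ((g : Matrix (Fin 2) (Fin 2) K)).mulVecLin v =
      ((g : Matrix (Fin 2) (Fin 2) K)).mulVecLin 0 := by
    simpa [Matrix.mulVecLin_apply] using h
  simpa using GLmulVecLin_injective g this

/-- The action of `GL(2,K)` on the projective line by matrix-vector multiplication on
representatives. -/
instance GLProjAction : MulAction (GL (Fin 2) K) (Proj K) where
  smul g x := Projectivization.map ((g : Matrix (Fin 2) (Fin 2) K).mulVecLin)
    (GLmulVecLin_injective g) x
  one_smul x := by
    induction x using Projectivization.ind with
    | h v hv =>
      show Projectivization.map _ _ _ = _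
      simp [Projectivization.map_mk]
  mul_smul g h x := by
    induction x using Projectivization.ind with
    | h v hv =>
      show Projectivization.map _ _ _ =
        Projectivization.map _ _ (Projectivization.map _ _ _)
      simp [Projectivization.map_mk, Matrix.mulVecLin_apply, Matrix.mulVec_mulVec,
        Units.val_mul]

lemma GL_smul_mk (g : GL (Fin 2) K) (v : Fin 2 → K) (hv : v ≠ 0) :
    g • Projectivization.mk K v hv =
      Projectivization.mk K ((g : Matrix (Fin 2) (Fin 2) K).mulVec v)
        (GLmulVec_ne_zero g hv) := by
  show Projectivization.map _ _ _ = _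
  simp [Projectivization.map_mk, Matrix.mulVecLin_apply]

/-- The action of `SL(2,K)` on the projective line. -/
instance SLProjAction : MulAction (Matrix.SpecialLinearGroup (Fin 2) K) (Proj K) :=
  MulAction.compHom _ (Matrix.SpecialLinearGroup.toGL)

end

noncomputable section
variable {K : Type*} [Field K]

lemma center_smul_eq (c : GL (Fin 2) K) (hc : c ∈ Subgroup.center (GL (Fin 2) K))
    (x : Proj K) : c • x = x := by
  have hcomm : ∀ t : Matrix.TransvectionStruct (Fin 2) K,
      Commute t.toMatrix (c : Matrix (Fin 2) (Fin 2) K) := by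
    intro t
    let u : GL (Fin 2) K := ⟨t.toMatrix, t.inv.toMatrix, t.mul_inv, t.inv_mul⟩
    have h := Subgroup.mem_center_iff.mp hc u
    have := congrArg Units.val h
    simpa [u, Commute, SemiconjBy] using this
  obtain ⟨r, hr⟩ := Matrix.mem_range_scalar_of_commute_transvectionStruct hcomm
  have hr0 : r ≠ 0 := by
    intro h0
    have hne : (![1, 0] : Fin 2 → K) ≠ 0 := by
      intro h
      have := congrFun h 0
      simp at this
    have := GLmulVec_ne_zero c hne
    rw [← hr, h0] at this
    rw [show (0 : K) = (0 : K) from rfl] at this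
    apply this
    funext i
    simp [Matrix.mulVec_diagonal]
  induction x using Projectivization.ind with
  | h v hv =>
    rw [GL_smul_mk]
    rw [Projectivization.mk_eq_mk_iff]
    refine ⟨Units.mk0 r hr0, ?_⟩
    rw [← hr]
    funext i
    simp [Matrix.mulVec_diagonal]

end

noncomputable section

/-- The projective general linear group `PGL(2,K) = GL(2,K)/Z(GL(2,K))`. -/
abbrev PGL2 (K : Type*) [Field K] : Type _ :=
  GL (Fin 2) K ⧸ Subgroup.center (GL (Fin 2) K)

variable {K : Type*} [Field K]

/-- The action of `GL(2,K)` on the projective line descends to `PGL(2,K)`. -/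
instance PGLProjSMul : SMul (PGL2 K) (Proj K) :=
  ⟨fun g x => Quotient.liftOn' g (fun a => a • x) (by
    intro a b hab
    rw [QuotientGroup.leftRel_apply] at hab
    show a • x = b • x
    have hb : b = a * (a⁻¹ * b) := by group
    rw [hb, mul_smul, center_smul_eq _ hab])⟩

instance PGLProjAction : MulAction (PGL2 K) (Proj K) where
  one_smul x := center_smul_eq 1 (Subgroup.one_mem _) x
  mul_smul g h x := by
    induction g using Quotient.inductionOn' with
    | h a =>
      induction h using Quotient.inductionOn' with
      | h b => exact mul_smul a b x

lemma PGL2_smul_mk' (a : GL (Fin 2) K) (x : Proj K) :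
    (QuotientGroup.mk a : PGL2 K) • x = a • x := rfl

/-- The natural homomorphism `SL(2,K) → PGL(2,K)`. -/
def SLtoPGL2 (K : Type*) [Field K] : Matrix.SpecialLinearGroup (Fin 2) K →* PGL2 K :=
  (QuotientGroup.mk' (Subgroup.center (GL (Fin 2) K))).comp Matrix.SpecialLinearGroup.toGL

/-- `PSL(2,K)`, realized as the image of `SL(2,K)` in `PGL(2,K)`. -/
def PSL2 (K : Type*) [Field K] : Subgroup (PGL2 K) := (SLtoPGL2 K).range

/-- A subset `F` of a group `G` acting on the projective line over `K` is *intersecting for the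
action on `k`-element subsets* if any two of its elements agree on some `k`-element subset of
the projective line. -/
def IntersectingOnSubsets (G : Type*) [Group G] (K : Type*) [Field K]
    [MulAction G (Proj K)] (k : ℕ) (F : Set G) : Prop :=
  ∀ g ∈ F, ∀ h ∈ F, ∃ S : Set (Proj K), S.ncard = k ∧ g • S = h • S

end

/-!
Since `SL(2,F_q)` acts transitively on the `q + 1` points of the projective line and has order
`q(q² - 1)`, a point stabilizer has order `q(q - 1)`. Let `g` fix `P = [v]`, say `g v = c v`.
The other root of the characteristic polynomial is `tr g - c`, so if `tr g ≠ 2c` then `g` has an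
eigenvector for `tr g - c` and fixes a second point `Q`, and `{P, Q}` is `g`-invariant. In
characteristic 2 the remaining case is `tr g = 0`, where Cayley–Hamilton gives `g² = -1 = 1`; an
involution preserves `{Q, g Q}` for any point `Q` it moves. Finally, if every element of a subgroup
preserves a `k`-set then so does `h⁻¹ g`, hence `g` and `h` agree on that set.
-/

open Projectivization
open scoped Matrix

namespace Matrix

variable {K : Type*} [Field K]

lemma det_sub_smul_one_fin_two (A : Matrix (Fin 2) (Fin 2) K) (x : K) :
    (A - x • 1).det = x ^ 2 - A.trace * x + A.det := by
  simp only [det_fin_two, trace_fin_two, sub_apply, smul_apply, one_apply_eq,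
    one_apply_ne zero_ne_one, one_apply_ne one_ne_zero, smul_eq_mul]
  ring

lemma det_sub_trace_sub_smul_one (A : Matrix (Fin 2) (Fin 2) K) (c : K) :
    (A - (A.trace - c) • 1).det = (A - c • 1).det := by
  rw [det_sub_smul_one_fin_two, det_sub_smul_one_fin_two]
  ring

lemma mul_self_eq_neg_det_smul_one_of_trace_eq_zero {A : Matrix (Fin 2) (Fin 2) K}
    (hA : A.trace = 0) : A * A = -(A.det • 1) := by
  have h := aeval_self_charpoly A
  rw [charpoly_fin_two, hA] at h
  simp only [map_add, map_pow, Polynomial.aeval_X, Polynomial.aeval_C, map_zero,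
    zero_mul, sub_zero, Algebra.algebraMap_eq_smul_one] at h
  rw [sq] at h
  exact eq_neg_of_add_eq_zero_left h

lemma det_sub_smul_one_eq_zero_of_mulVec_eq_smul {A : Matrix (Fin 2) (Fin 2) K}
    {v : Fin 2 → K} {c : K} (hv : v ≠ 0) (hAv : A *ᵥ v = c • v) : (A - c • 1).det = 0 :=
  exists_mulVec_eq_zero_iff.mp
    ⟨v, hv, by rw [sub_mulVec, smul_mulVec, one_mulVec, hAv, sub_self]⟩

lemma exists_mulVec_eq_trace_sub_smul {A : Matrix (Fin 2) (Fin 2) K} {v : Fin 2 → K} {c : K}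
    (hv : v ≠ 0) (hAv : A *ᵥ v = c • v) : ∃ w ≠ 0, A *ᵥ w = (A.trace - c) • w := by
  have hdet : (A - (A.trace - c) • 1).det = 0 := by
    rw [det_sub_trace_sub_smul_one, det_sub_smul_one_eq_zero_of_mulVec_eq_smul hv hAv]
  obtain ⟨w, hw, hAw⟩ := exists_mulVec_eq_zero_iff.mpr hdet
  rw [sub_mulVec, smul_mulVec, one_mulVec, sub_eq_zero] at hAw
  exact ⟨w, hw, hAw⟩

end Matrix

lemma Projectivization.mk_ne_mk_of_mulVec_eq_smul {K n : Type*} [Field K] [Fintype n]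
    {A : Matrix n n K} {v w : n → K} {a b : K} (hv : v ≠ 0) (hw : w ≠ 0)
    (hAv : A *ᵥ v = a • v) (hAw : A *ᵥ w = b • w) (hab : a ≠ b) : mk K v hv ≠ mk K w hw := by
  rw [Ne, mk_eq_mk_iff']
  rintro ⟨x, rfl⟩
  have h : (a - b) • x • w = 0 := by
    rw [sub_smul, ← hAv, Matrix.mulVec_smul, hAw, smul_comm, sub_self]
  exact hv (smul_eq_zero.mp h |>.resolve_left (sub_ne_zero.mpr hab))

section ProjectiveLine

variable {K : Type*} [Field K]

instance : Nontrivial (Proj K) := by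
  refine ⟨mk K ![1, 0] (by simp), mk K ![0, 1] (by simp), ?_⟩
  rw [Ne, mk_eq_mk_iff']
  rintro ⟨a, ha⟩
  simpa using congrFun ha 0

lemma SL_smul_mk (g : SL(2, K)) (v : Fin 2 → K) (hv : v ≠ 0) :
    g • mk K v hv = mk K ((g : Matrix (Fin 2) (Fin 2) K) *ᵥ v)
      (show (g : Matrix (Fin 2) (Fin 2) K) *ᵥ v ≠ 0 from
        GLmulVec_ne_zero (Matrix.SpecialLinearGroup.toGL g) hv) :=
  GL_smul_mk _ v hv

lemma SL_smul_mk_eq_self_iff (g : SL(2, K)) (v : Fin 2 → K) (hv : v ≠ 0) :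
    g • mk K v hv = mk K v hv ↔ ∃ c : K, (g : Matrix (Fin 2) (Fin 2) K) *ᵥ v = c • v := by
  rw [SL_smul_mk, mk_eq_mk_iff']
  exact exists_congr fun _ => eq_comm

lemma exists_SL_mulVec_eq (v : Fin 2 → K) (hv : v ≠ 0) :
    ∃ g : SL(2, K), (g : Matrix (Fin 2) (Fin 2) K) *ᵥ ![1, 0] = v := by
  by_cases h0 : v 0 = 0
  · have h1 : v 1 ≠ 0 := fun h1 => hv (funext (Fin.forall_fin_two.mpr ⟨h0, h1⟩))
    refine ⟨⟨!![0, -(v 1)⁻¹; v 1, 0], by simp [Matrix.det_fin_two_of, h1]⟩, ?_⟩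
    ext i; fin_cases i <;> simp [h0]
  · refine ⟨⟨!![v 0, 0; v 1, (v 0)⁻¹], by simp [Matrix.det_fin_two_of, h0]⟩, ?_⟩
    ext i; fin_cases i <;> simp

instance : MulAction.IsPretransitive SL(2, K) (Proj K) := by
  refine ⟨fun x y => ?_⟩
  suffices h : ∀ z : Proj K, ∃ g : SL(2, K), g • mk K ![1, 0] (by simp) = z by
    obtain ⟨gx, rfl⟩ := h x
    obtain ⟨gy, rfl⟩ := h y
    exact ⟨gy * gx⁻¹, by rw [mul_smul, inv_smul_smul]⟩
  intro z
  induction z using Projectivization.ind with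
  | h v hv =>
    obtain ⟨g, hg⟩ := exists_SL_mulVec_eq v hv
    exact ⟨g, by simp only [SL_smul_mk, hg]⟩

lemma SL_mul_self_eq_one_of_trace_eq_zero [CharP K 2] {g : SL(2, K)}
    (hg : (g : Matrix (Fin 2) (Fin 2) K).trace = 0) : g * g = 1 := by
  ext : 1
  simp [Matrix.mul_self_eq_neg_det_smul_one_of_trace_eq_zero hg, CharTwo.neg_eq]

lemma SL_exists_fixed_ne_or_mul_self_eq_one [CharP K 2] {g : SL(2, K)} {P : Proj K}
    (hg : g • P = P) : (∃ Q ≠ P, g • Q = Q) ∨ g * g = 1 := by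
  induction P using Projectivization.ind with
  | h v hv =>
    obtain ⟨c, hc⟩ := (SL_smul_mk_eq_self_iff g v hv).mp hg
    by_cases ht : (g : Matrix (Fin 2) (Fin 2) K).trace = 0
    · exact Or.inr (SL_mul_self_eq_one_of_trace_eq_zero ht)
    left
    obtain ⟨w, hw, hgw⟩ := Matrix.exists_mulVec_eq_trace_sub_smul hv hc
    have hne : (g : Matrix (Fin 2) (Fin 2) K).trace - c ≠ c := fun h =>
      ht (by rw [sub_eq_iff_eq_add.mp h, CharTwo.add_self_eq_zero])
    exact ⟨mk K w hw, mk_ne_mk_of_mulVec_eq_smul hw hv hgw hc hne,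
      (SL_smul_mk_eq_self_iff g w hw).mpr ⟨_, hgw⟩⟩

end ProjectiveLine

lemma MulAction.exists_ncard_two_smul_eq_of_mul_self_eq_one {G X : Type*} [Group G]
    [MulAction G X] [Nontrivial X] {g : G} (hg : g * g = 1) :
    ∃ S : Set X, S.ncard = 2 ∧ g • S = S := by
  by_cases htriv : ∀ x : X, g • x = x
  · obtain ⟨x, y, hxy⟩ := exists_pair_ne X
    exact ⟨{x, y}, Set.ncard_pair hxy, by simp [Set.smul_set_insert, htriv]⟩
  obtain ⟨x, hx⟩ := not_forall.mp htriv
  refine ⟨{x, g • x}, Set.ncard_pair (Ne.symm hx), ?_⟩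
  rw [Set.smul_set_insert, Set.smul_set_singleton, smul_smul, hg, one_smul, Set.pair_comm]

lemma SL_exists_ncard_two_smul_eq_of_mem_stabilizer {K : Type*} [Field K] [CharP K 2]
    {g : SL(2, K)} {P : Proj K} (hg : g ∈ MulAction.stabilizer SL(2, K) P) :
    ∃ S : Set (Proj K), S.ncard = 2 ∧ g • S = S := by
  rcases SL_exists_fixed_ne_or_mul_self_eq_one hg with ⟨Q, hQP, hQ⟩ | hsq
  · exact ⟨{P, Q}, Set.ncard_pair hQP.symm,
      by rw [Set.smul_set_insert, Set.smul_set_singleton, MulAction.mem_stabilizer_iff.mp hg, hQ]⟩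
  · exact MulAction.exists_ncard_two_smul_eq_of_mul_self_eq_one hsq

lemma intersectingOnSubsets_of_forall_smul_eq {G K : Type*} [Group G] [Field K]
    [MulAction G (Proj K)] {k : ℕ} {H : Subgroup G}
    (hH : ∀ g ∈ H, ∃ S : Set (Proj K), S.ncard = k ∧ g • S = S) :
    IntersectingOnSubsets G K k H := by
  intro g hg h hh
  obtain ⟨S, hS, hgS⟩ := hH (h⁻¹ * g) (mul_mem (inv_mem hh) hg)
  exact ⟨S, hS, by rw [← mul_inv_cancel_left h g, mul_smul, hgS]⟩

lemma Matrix.card_specialLinearGroup_mul_card_units {n R : Type*} [DecidableEq n] [Fintype n]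
    [Nonempty n] [CommRing R] :
    Nat.card (SpecialLinearGroup n R) * Nat.card Rˣ = Nat.card (GL n R) := by
  have hrange : SpecialLinearGroup.toGL.range = (GeneralLinearGroup.det : GL n R →* Rˣ).ker := by
    ext g
    refine ⟨?_, fun hg => ⟨⟨g, congrArg Units.val hg⟩, Units.ext rfl⟩⟩
    rintro ⟨g, rfl⟩
    exact Units.ext g.prop
  rw [Nat.card_congr (MonoidHom.ofInjective SpecialLinearGroup.toGL_injective).toEquiv, hrange,
    ← Subgroup.card_mul_index (GeneralLinearGroup.det : GL n R →* Rˣ).ker, Subgroup.index_ker,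
    MonoidHom.range_eq_top.mpr GeneralLinearGroup.det_surjective, Subgroup.card_top]

lemma card_SL_fin_two {K : Type*} [Field K] [Fintype K] :
    Nat.card SL(2, K) = Fintype.card K * (Fintype.card K ^ 2 - 1) := by
  have h := Matrix.card_specialLinearGroup_mul_card_units (n := Fin 2) (R := K)
  rw [Matrix.card_GL_field, Fin.prod_univ_two, Nat.card_units,
    Nat.card_eq_fintype_card (α := K)] at h
  simp only [Fin.val_zero, Fin.val_one, pow_zero, pow_one] at h
  refine Nat.eq_of_mul_eq_mul_right (Nat.sub_pos_of_lt (Fintype.one_lt_card (α := K)))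
    (h.trans ?_)
  rw [show Fintype.card K ^ 2 - Fintype.card K = Fintype.card K * (Fintype.card K - 1) by
    rw [Nat.mul_sub_one, sq]]
  ring

lemma card_stabilizer_SL_fin_two {K : Type*} [Field K] [Fintype K] (P : Proj K) :
    Nat.card (MulAction.stabilizer SL(2, K) P) = Fintype.card K * (Fintype.card K - 1) := by
  have hProj : Nat.card (Proj K) = Fintype.card K + 1 := by
    rw [Projectivization.card_of_finrank_two K _ (by simp), Nat.card_eq_fintype_card]
  have h := (MulAction.stabilizer SL(2, K) P).card_mul_index
  rw [MulAction.index_stabilizer_of_transitive, hProj, card_SL_fin_two] at h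
  refine Nat.eq_of_mul_eq_mul_right (Nat.add_one_pos (Fintype.card K)) (h.trans ?_)
  rw [show Fintype.card K ^ 2 - 1 = (Fintype.card K + 1) * (Fintype.card K - 1) by
    rw [← Nat.sq_sub_sq, one_pow]]
  ring

open scoped Pointwise in
/-- For `q = 2^m`, the stabilizer in `SL(2, F_q)` of a point of the projective
line has order `q(q-1)`, each of its elements maps some 2-element subset of the projective line
onto itself, and the stabilizer is intersecting for the action on 2-element subsets. -/
theorem point_stabilizer_intersecting_on_two_subsets (m : ℕ) (hm : 1 ≤ m)
    (P : Proj (GaloisField 2 m)) :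
    Nat.card (MulAction.stabilizer (Matrix.SpecialLinearGroup (Fin 2) (GaloisField 2 m)) P) =
        2 ^ m * (2 ^ m - 1) ∧
    (∀ g ∈ MulAction.stabilizer (Matrix.SpecialLinearGroup (Fin 2) (GaloisField 2 m)) P,
      ∃ S : Set (Proj (GaloisField 2 m)), S.ncard = 2 ∧ g • S = S) ∧
    IntersectingOnSubsets _ (GaloisField 2 m) 2
      ((MulAction.stabilizer (Matrix.SpecialLinearGroup (Fin 2) (GaloisField 2 m)) P :
          Subgroup (Matrix.SpecialLinearGroup (Fin 2) (GaloisField 2 m))) :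
        Set (Matrix.SpecialLinearGroup (Fin 2) (GaloisField 2 m))) := by
  have : Fintype (GaloisField 2 m) := Fintype.ofFinite _
  have hq : Fintype.card (GaloisField 2 m) = 2 ^ m := by
    rw [← Nat.card_eq_fintype_card, GaloisField.card 2 m (by omega)]
  have hpair := fun g (hg : g ∈ MulAction.stabilizer _ P) =>
    SL_exists_ncard_two_smul_eq_of_mem_stabilizer hg
  exact ⟨by rw [card_stabilizer_SL_fin_two, hq], hpair,
    intersectingOnSubsets_of_forall_smul_eq hpair⟩
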